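/- arXiv:1401.6936 — 2 statements merged into one kernel-verified Lean document; each statement's English description precedes it below -/
import Mathlib

section
/- Let G be a finite nonempty graph satisfying Γ(G) = Δ(G) + 1, where Δ(G) is the maximum degree of G. Then for every finite nonempty graph H, Γ(G[H]) = Γ(G) · Γ(H). -/
open SimpleGraph

/-- A greedy `k`-coloring of `G`: a partition of the vertex set into nonempty stable sets
`S 0, …, S (k-1)` such that for all `j < i`, every vertex of `S i` has a neighbor in `S j`. -/
def IsGreedyColoring {V : Type*} (G : SimpleGraph V) (k : ℕ) (S : Fin k → Set V) : Prop :=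
  (∀ v : V, ∃! i, v ∈ S i) ∧
  (∀ i, (S i).Nonempty) ∧
  (∀ i, ∀ v ∈ S i, ∀ w ∈ S i, ¬ G.Adj v w) ∧
  (∀ i j : Fin k, j < i → ∀ v ∈ S i, ∃ w ∈ S j, G.Adj v w)

/-- The Grundy number `Γ(G)`: the largest `k` such that `G` has a greedy `k`-coloring. -/
noncomputable def grundy {V : Type*} [Fintype V] (G : SimpleGraph V) : ℕ :=
  sSup {k | ∃ S : Fin k → Set V, IsGreedyColoring G k S}

/-- Lexicographic product `G[H]`: `(a,x)` adjacent to `(b,y)` iff `ab ∈ E(G)`,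
or `a = b` and `xy ∈ E(H)`. -/
def lexProd {α β : Type*} (G : SimpleGraph α) (H : SimpleGraph β) :
    SimpleGraph (α × β) where
  Adj x y := G.Adj x.1 y.1 ∨ (x.1 = y.1 ∧ H.Adj x.2 y.2)
  symm := ⟨fun _ _ h => by
    rcases h with h | ⟨h1, h2⟩
    · exact Or.inl (G.adj_symm h)
    · exact Or.inr ⟨h1.symm, H.adj_symm h2⟩⟩
  loopless := ⟨fun _ h => by
    rcases h with h | ⟨-, h2⟩
    · exact G.ne_of_adj h rfl
    · exact H.ne_of_adj h2 rfl⟩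

/-- Maximum degree `Δ(G)`. -/
noncomputable def maxDeg {V : Type*} [Fintype V] (G : SimpleGraph V) : ℕ :=
  Finset.univ.sup fun v => (G.neighborSet v).ncard

/-!
For greedy colorings `S` of `G` and `T` of `H`, the classes `S i × T j`, ordered
lexicographically in `(i, j)`, form a greedy coloring of `G[H]`; so `Γ(G) Γ(H) ≤ Γ(G[H])`.

Conversely, in a greedy coloring of `G[H]` the colors met by a fibre `{a} × H` induce a greedy
coloring of `H`, because a vertex outside the fibre adjacent to one vertex of it is adjacent to all
of it; so at most `Γ(H)` colors meet each fibre. Every color meets the closed neighbourhood of a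
vertex of the last class, which lies in at most `Δ(G) + 1` fibres. Hence
`Γ(G[H]) ≤ (Δ(G) + 1) Γ(H)`, which is `Γ(G) Γ(H)` when `Γ(G) = Δ(G) + 1`.
-/

open Finset

namespace IsGreedyColoring

variable {V : Type*} {G : SimpleGraph V} {k : ℕ} {S : Fin k → Set V}

lemma card_le [Fintype V] (hS : IsGreedyColoring G k S) : k ≤ Fintype.card V := by
  choose f hf using hS.2.1
  have hf_inj : Function.Injective f := fun i j hij =>
    (hS.1 (f i)).unique (hf i) (hij ▸ hf j)
  simpa using Fintype.card_le_of_injective f hf_inj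

lemma exists_mem_of_le (hS : IsGreedyColoring G k S) {i j : Fin k} {v : V} (hv : v ∈ S i)
    (hji : j ≤ i) : ∃ w ∈ S j, w = v ∨ G.Adj v w := by
  rcases hji.lt_or_eq with hji | rfl
  · obtain ⟨w, hw, hvw⟩ := hS.2.2.2 i j hji v hv
    exact ⟨w, hw, .inr hvw⟩
  · exact ⟨v, hv, .inl rfl⟩

end IsGreedyColoring

section grundy

variable {V : Type*} [Fintype V] {G : SimpleGraph V}

lemma bddAbove_setOf_isGreedyColoring (G : SimpleGraph V) :
    BddAbove {k | ∃ S : Fin k → Set V, IsGreedyColoring G k S} :=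
  ⟨Fintype.card V, fun _ ⟨_, hS⟩ => hS.card_le⟩

lemma IsGreedyColoring.le_grundy {k : ℕ} {S : Fin k → Set V} (hS : IsGreedyColoring G k S) :
    k ≤ grundy G :=
  le_csSup (bddAbove_setOf_isGreedyColoring G) ⟨S, hS⟩

lemma grundy_le {n : ℕ} (h : ∀ k (S : Fin k → Set V), IsGreedyColoring G k S → k ≤ n) :
    grundy G ≤ n :=
  csSup_le' fun k ⟨S, hS⟩ => h k S hS

lemma exists_isGreedyColoring_grundy (h : 0 < grundy G) :
    ∃ S : Fin (grundy G) → Set V, IsGreedyColoring G (grundy G) S := by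
  have hne : {k | ∃ S : Fin k → Set V, IsGreedyColoring G k S}.Nonempty :=
    Set.nonempty_iff_ne_empty.2 fun hempty => by simp [grundy, hempty] at h
  exact Nat.sSup_mem hne (bddAbove_setOf_isGreedyColoring G)

lemma card_closedNbhd_le_maxDeg [DecidableEq V] [DecidableRel G.Adj] (a : V) :
    #{b | b = a ∨ G.Adj a b} ≤ maxDeg G + 1 := by
  have hdeg : G.degree a ≤ maxDeg G := by
    rw [← G.card_neighborFinset_eq_degree, ← Set.ncard_coe_finset, G.coe_neighborFinset]
    exact le_sup (f := fun v => (G.neighborSet v).ncard) (mem_univ a)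
  calc #{b | b = a ∨ G.Adj a b} ≤ #{b | b = a} + #{b | G.Adj a b} := by
        rw [filter_or]; exact card_union_le _ _
    _ ≤ 1 + G.degree a := by
        gcongr
        · simp [filter_eq']
        · rw [← G.card_neighborFinset_eq_degree, G.neighborFinset_eq_filter]
    _ ≤ maxDeg G + 1 := by omega

end grundy

lemma finProdFinEquiv_lt_finProdFinEquiv {k l : ℕ} {p q : Fin k × Fin l} :
    finProdFinEquiv p < finProdFinEquiv q ↔ p.1 < q.1 ∨ p.1 = q.1 ∧ p.2 < q.2 := by
  obtain ⟨⟨i, hi⟩, ⟨j, hj⟩⟩ := p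
  obtain ⟨⟨i', hi'⟩, ⟨j', hj'⟩⟩ := q
  simp only [Fin.lt_def, Fin.ext_iff, finProdFinEquiv_apply_val]
  rcases lt_trichotomy i i' with h | rfl | h
  · have : l * i + l ≤ l * i' := by nlinarith
    omega
  · omega
  · have : l * i' + l ≤ l * i := by nlinarith
    omega

section lexProd

variable {α β : Type*} {G : SimpleGraph α} {H : SimpleGraph β}

lemma isGreedyColoring_lexProd {k l : ℕ} {S : Fin k → Set α} {T : Fin l → Set β}
    (hS : IsGreedyColoring G k S) (hT : IsGreedyColoring H l T) :
    IsGreedyColoring (lexProd G H) (k * l)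
      (fun m => S (finProdFinEquiv.symm m).1 ×ˢ T (finProdFinEquiv.symm m).2) := by
  obtain ⟨hSp, hSne, hSst, hSgr⟩ := hS
  obtain ⟨hTp, hTne, hTst, hTgr⟩ := hT
  refine ⟨fun ⟨a, x⟩ => ?_, fun m => (hSne _).prod (hTne _), ?_, ?_⟩
  · obtain ⟨i, hi, hi_uniq⟩ := hSp a
    obtain ⟨j, hj, hj_uniq⟩ := hTp x
    refine ⟨finProdFinEquiv (i, j), by simpa using ⟨hi, hj⟩, fun m ⟨ha, hx⟩ => ?_⟩
    rw [← Equiv.symm_apply_eq, ← hi_uniq _ ha, ← hj_uniq _ hx]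
  · rintro m ⟨a, x⟩ ⟨ha, hx⟩ ⟨b, y⟩ ⟨hb, hy⟩ (hab | ⟨-, hxy⟩)
    exacts [hSst _ a ha b hb hab, hTst _ x hx y hy hxy]
  · intro m m' hlt ⟨a, x⟩ ⟨ha, hx⟩
    rw [← finProdFinEquiv.apply_symm_apply m, ← finProdFinEquiv.apply_symm_apply m',
      finProdFinEquiv_lt_finProdFinEquiv] at hlt
    rcases hlt with hlt | ⟨heq, hlt⟩
    · obtain ⟨b, hb, hab⟩ := hSgr _ _ hlt a ha
      obtain ⟨y, hy⟩ := hTne (finProdFinEquiv.symm m').2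
      exact ⟨(b, y), ⟨hb, hy⟩, .inl hab⟩
    · obtain ⟨y, hy, hxy⟩ := hTgr _ _ hlt x hx
      exact ⟨(a, y), ⟨heq ▸ ha, hy⟩, .inr ⟨rfl, hxy⟩⟩

lemma mul_grundy_le_grundy_lexProd [Fintype α] [Fintype β] :
    grundy G * grundy H ≤ grundy (lexProd G H) := by
  rcases Nat.eq_zero_or_pos (grundy G * grundy H) with h | h
  · simp [h]
  obtain ⟨S, hS⟩ := exists_isGreedyColoring_grundy (Nat.pos_of_mul_pos_right h)
  obtain ⟨T, hT⟩ := exists_isGreedyColoring_grundy (Nat.pos_of_mul_pos_left h)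
  exact (isGreedyColoring_lexProd hS hT).le_grundy

end lexProd

section fiber

variable {α β : Type*} {G : SimpleGraph α} {H : SimpleGraph β} {N : ℕ}
  {U : Fin N → Set (α × β)}

open scoped Classical in
noncomputable def fiberColors (U : Fin N → Set (α × β)) (a : α) : Finset (Fin N) :=
  {i | ∃ x, (a, x) ∈ U i}

lemma mem_fiberColors {a : α} {i : Fin N} : i ∈ fiberColors U a ↔ ∃ x, (a, x) ∈ U i := by
  simp [fiberColors]

lemma IsGreedyColoring.fiber (hU : IsGreedyColoring (lexProd G H) N U) (a : α) :
    IsGreedyColoring H #(fiberColors U a)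
      (fun t => {x | (a, x) ∈ U ((fiberColors U a).orderEmbOfFin rfl t)}) := by
  set f := (fiberColors U a).orderEmbOfFin rfl
  have hrange : ∀ i, i ∈ Set.range f ↔ ∃ x, (a, x) ∈ U i := by
    simp [f, range_orderEmbOfFin, mem_fiberColors]
  obtain ⟨hUp, -, hUst, hUgr⟩ := hU
  refine ⟨fun x => ?_, fun t => (hrange _).1 ⟨t, rfl⟩,
    fun t x hx y hy hxy => hUst _ _ hx _ hy (.inr ⟨rfl, hxy⟩), fun t t' hlt x hx => ?_⟩
  · obtain ⟨i, hi, hi_uniq⟩ := hUp (a, x)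
    obtain ⟨t, rfl⟩ := (hrange i).2 ⟨x, hi⟩
    exact ⟨t, hi, fun t' ht' => f.injective (hi_uniq _ ht')⟩
  · obtain ⟨⟨b, y⟩, hby, hab | ⟨rfl, hxy⟩⟩ := hUgr _ _ (f.strictMono hlt) (a, x) hx
    · -- `b` is adjacent to the whole fibre over `a`, which meets the class of `(b, y)`.
      obtain ⟨x', hx'⟩ := (hrange _).1 ⟨t', rfl⟩
      exact (hUst _ _ hx' _ hby (.inl hab)).elim
    · exact ⟨y, hby, hxy⟩

lemma IsGreedyColoring.card_fiberColors_le_grundy [Fintype β]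
    (hU : IsGreedyColoring (lexProd G H) N U) (a : α) : #(fiberColors U a) ≤ grundy H :=
  (hU.fiber a).le_grundy

lemma IsGreedyColoring.le_maxDeg_succ_mul_grundy [Fintype α] [Fintype β]
    (hU : IsGreedyColoring (lexProd G H) N U) : N ≤ (maxDeg G + 1) * grundy H := by
  classical
  rcases N.eq_zero_or_pos with rfl | hN
  · exact Nat.zero_le _
  let last : Fin N := ⟨N - 1, by omega⟩
  obtain ⟨⟨a, x⟩, hax⟩ := hU.2.1 last
  let B : Finset α := {b | b = a ∨ G.Adj a b}
  have hcover : (univ : Finset (Fin N)) ⊆ B.biUnion (fiberColors U) := by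
    intro i _
    have hi : i ≤ last := Fin.le_def.2 (Nat.le_sub_one_of_lt i.2)
    obtain ⟨⟨b, y⟩, hby, hadj⟩ := hU.exists_mem_of_le hax hi
    refine mem_biUnion.2 ⟨b, ?_, mem_fiberColors.2 ⟨y, hby⟩⟩
    simp only [B, mem_filter, mem_univ, true_and]
    rcases hadj with h | h | ⟨h, -⟩
    exacts [.inl (Prod.ext_iff.1 h).1, .inr h, .inl h.symm]
  calc N = #(univ : Finset (Fin N)) := by simp
    _ ≤ #(B.biUnion (fiberColors U)) := card_le_card hcover
    _ ≤ ∑ b ∈ B, #(fiberColors U b) := card_biUnion_le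
    _ ≤ #B * grundy H := by
        simpa using sum_le_card_nsmul _ _ _ fun b _ => hU.card_fiberColors_le_grundy b
    _ ≤ (maxDeg G + 1) * grundy H := Nat.mul_le_mul_right _ (card_closedNbhd_le_maxDeg a)

lemma grundy_lexProd_le [Fintype α] [Fintype β] :
    grundy (lexProd G H) ≤ (maxDeg G + 1) * grundy H :=
  grundy_le fun _ _ hU => hU.le_maxDeg_succ_mul_grundy

end fiber

theorem grundy_lexProd_of_grundy_eq_maxDeg_succ_general {α β : Type*}
    [Fintype α] [Fintype β]
    (G : SimpleGraph α) (H : SimpleGraph β) (hG : grundy G = maxDeg G + 1) :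
    grundy (lexProd G H) = grundy G * grundy H :=
  le_antisymm (hG ▸ grundy_lexProd_le) mul_grundy_le_grundy_lexProd

/-- If `G` is a finite nonempty graph with `Γ(G) = Δ(G) + 1`, then for every finite
nonempty graph `H`, `Γ(G[H]) = Γ(G) · Γ(H)`. -/
theorem grundy_lexProd_of_grundy_eq_maxDeg_succ {α β : Type*}
    [Fintype α] [Fintype β] [Nonempty α] [Nonempty β]
    (G : SimpleGraph α) (H : SimpleGraph β) (hG : grundy G = maxDeg G + 1) :
    grundy (lexProd G H) = grundy G * grundy H :=
  grundy_lexProd_of_grundy_eq_maxDeg_succ_general G H hG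
end

section
/- Let H be a finite graph with Γ(H) = 2. Then for every finite graph G, Γ(G × H) = Γ(G × K_2). -/
/-!
A *partial* greedy coloring (nonempty stable classes, every vertex adjacent to each lower class,
not necessarily covering the graph) extends, one vertex at a time, to a greedy coloring with at
least as many classes; so `k ≤ Γ(G)` as soon as a partial greedy coloring with `k` classes exists.

Let `C` be a set of vertices of `G` closed under adjacency and `f` a map preserving and reflecting
adjacency on `C`. Every class of a greedy coloring meets `C` once its top class does, since the top
class sees all the others. Restricting to `C` and pushing forward along `f` then gives a partial
greedy coloring of `G'` with the same number of classes. If this is possible around every vertex,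
then `Γ(G) ≤ Γ(G')`.

A graph `H` with `Γ(H) ≤ 2` has no triangle and no induced `P₄`. So each of its components is
complete bipartite and maps onto `K₂` in this way, and any edge of `H` is such a copy of `K₂`.
Both maps lift to `G × ·`.
-/

open SimpleGraph

def tensorProd {α β : Type*} (G : SimpleGraph α) (H : SimpleGraph β) :
    SimpleGraph (α × β) where
  Adj x y := G.Adj x.1 y.1 ∧ H.Adj x.2 y.2
  symm := ⟨fun _ _ h => ⟨h.1.symm, h.2.symm⟩⟩
  loopless := ⟨fun _ h => G.irrefl h.1⟩

namespace Grundy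

variable {V W : Type*} {G : SimpleGraph V} {G' : SimpleGraph W} {k : ℕ} {S : Fin k → Set V}

structure IsPartialGreedyColoring (G : SimpleGraph V) (k : ℕ) (S : Fin k → Set V) : Prop where
  nonempty : ∀ i, (S i).Nonempty
  not_adj : ∀ i, ∀ v ∈ S i, ∀ w ∈ S i, ¬ G.Adj v w
  exists_adj : ∀ i j : Fin k, j < i → ∀ v ∈ S i, ∃ w ∈ S j, G.Adj v w

theorem _root_.IsGreedyColoring.isPartialGreedyColoring (h : IsGreedyColoring G k S) :
    IsPartialGreedyColoring G k S :=
  ⟨h.2.1, h.2.2.1, h.2.2.2⟩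

namespace IsPartialGreedyColoring

theorem eq_of_mem_of_mem (h : IsPartialGreedyColoring G k S) {i j : Fin k} {v : V}
    (hi : v ∈ S i) (hj : v ∈ S j) : i = j := by
  by_contra hne
  wlog hlt : j < i generalizing i j
  · exact this hj hi (Ne.symm hne) (lt_of_le_of_ne (not_lt.1 hlt) hne)
  obtain ⟨w, hw, hvw⟩ := h.exists_adj i j hlt v hi
  exact h.not_adj j v hj w hw hvw

theorem isGreedyColoring (h : IsPartialGreedyColoring G k S) (hcov : ∀ v, ∃ i, v ∈ S i) :
    IsGreedyColoring G k S :=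
  ⟨fun v => let ⟨i, hi⟩ := hcov v; ⟨i, hi, fun _ hj => h.eq_of_mem_of_mem hj hi⟩,
    h.nonempty, h.not_adj, h.exists_adj⟩

theorem card_le [Fintype V] (h : IsPartialGreedyColoring G k S) : k ≤ Fintype.card V := by
  simpa using Fintype.card_le_of_injective (fun i => (h.nonempty i).some) fun i j hij =>
    h.eq_of_mem_of_mem (h.nonempty i).some_mem <| by
      simp only at hij
      exact hij ▸ (h.nonempty j).some_mem

theorem update_insert (h : IsPartialGreedyColoring G k S) {v : V}
    {i₀ : Fin k} (hfree : ∀ w ∈ S i₀, ¬ G.Adj v w) (hbelow : ∀ j < i₀, ∃ w ∈ S j, G.Adj v w) :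
    IsPartialGreedyColoring G k (Function.update S i₀ (insert v (S i₀))) := by
  have hsub : ∀ i, S i ⊆ Function.update S i₀ (insert v (S i₀)) i := fun i => by
    rcases eq_or_ne i i₀ with rfl | hi
    · simp
    · simp [hi]
  refine ⟨fun i => (h.nonempty i).mono (hsub i), fun i => ?_, fun i j hij => ?_⟩
  · rcases eq_or_ne i i₀ with rfl | hi
    · simp only [Function.update_self, Set.mem_insert_iff]
      rintro a (rfl | ha) b (rfl | hb)
      exacts [G.irrefl, hfree b hb, fun hab => hfree a ha hab.symm, h.not_adj i a ha b hb]
    · simpa [hi] using h.not_adj i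
  · have hex : ∀ a ∈ S i, ∃ w ∈ Function.update S i₀ (insert v (S i₀)) j, G.Adj a w :=
      fun a ha => (h.exists_adj i j hij a ha).imp fun w ⟨hw, haw⟩ => ⟨hsub j hw, haw⟩
    rcases eq_or_ne i i₀ with rfl | hi
    · simp only [Function.update_self, Set.forall_mem_insert]
      exact ⟨(hbelow j hij).imp fun w ⟨hw, hvw⟩ => ⟨hsub j hw, hvw⟩, hex⟩
    · simpa [hi] using hex

theorem snoc (h : IsPartialGreedyColoring G k S) {v : V} (hv : ∀ j, ∃ w ∈ S j, G.Adj v w) :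
    IsPartialGreedyColoring G (k + 1) (Fin.snoc (α := fun _ => Set V) S {v}) := by
  refine ⟨fun i => ?_, fun i => ?_, fun i j hij => ?_⟩
  · induction i using Fin.lastCases with
    | last => simp
    | cast i => simpa using h.nonempty i
  · induction i using Fin.lastCases with
    | last => simp
    | cast i => simpa using h.not_adj i
  · obtain ⟨j, rfl⟩ := Fin.exists_castSucc_eq.2 (Fin.ne_last_of_lt hij)
    induction i using Fin.lastCases with
    | last => simpa using hv j
    | cast i => simpa using h.exists_adj i j (by simpa using hij)

theorem exists_extend (h : IsPartialGreedyColoring G k S) (v : V) :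
    ∃ k', k ≤ k' ∧ ∃ S' : Fin k' → Set V,
      IsPartialGreedyColoring G k' S' ∧ insert v (⋃ i, S i) ⊆ ⋃ i, S' i := by
  classical
  by_cases hfree : ∃ i, ∀ w ∈ S i, ¬ G.Adj v w
  · obtain ⟨i₀, hi₀, hmin⟩ := wellFounded_lt.has_min _ hfree
    have hbelow : ∀ j < i₀, ∃ w ∈ S j, G.Adj v w := fun j hj => by
      by_contra! hj'
      exact hmin j hj' hj
    refine ⟨k, le_rfl, _, h.update_insert hi₀ hbelow, Set.insert_subset ?_ ?_⟩
    · exact Set.mem_iUnion.2 ⟨i₀, by simp⟩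
    · refine Set.iUnion_subset fun i => (fun w hw => Set.mem_iUnion.2 ⟨i, ?_⟩)
      rcases eq_or_ne i i₀ with rfl | hi
      · simp [hw]
      · simpa [hi] using hw
  · push Not at hfree
    refine ⟨k + 1, k.le_succ, _, h.snoc hfree, Set.insert_subset ?_ ?_⟩
    · exact Set.mem_iUnion.2 ⟨Fin.last k, by simp⟩
    · exact Set.iUnion_subset fun i => Set.subset_iUnion_of_subset i.castSucc (by simp)

theorem exists_isGreedyColoring [Finite V] (h : IsPartialGreedyColoring G k S) :
    ∃ k', k ≤ k' ∧ ∃ S' : Fin k' → Set V, IsGreedyColoring G k' S' := by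
  classical
  have := Fintype.ofFinite V
  suffices ∀ U : Finset V, ∃ k', k ≤ k' ∧ ∃ S' : Fin k' → Set V,
      IsPartialGreedyColoring G k' S' ∧ ↑U ⊆ ⋃ i, S' i by
    obtain ⟨k', hk, S', hS', hcov⟩ := this Finset.univ
    exact ⟨k', hk, S', hS'.isGreedyColoring fun v => Set.mem_iUnion.1 (hcov (by simp))⟩
  intro U
  induction U using Finset.induction_on with
  | empty => exact ⟨k, le_rfl, S, h, by simp⟩
  | insert v U _ ih =>
    obtain ⟨k₁, hk₁, S₁, hS₁, hU₁⟩ := ih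
    obtain ⟨k₂, hk₂, S₂, hS₂, hU₂⟩ := hS₁.exists_extend v
    exact ⟨k₂, hk₁.trans hk₂, S₂, hS₂, by simpa using (Set.insert_subset_insert hU₁).trans hU₂⟩

theorem inter {n : ℕ} {S : Fin (n + 1) → Set V} (h : IsPartialGreedyColoring G (n + 1) S)
    {C : Set V} (hC : ∀ x ∈ C, ∀ y, G.Adj x y → y ∈ C) {v : V} (hv : v ∈ S (Fin.last n))
    (hvC : v ∈ C) : IsPartialGreedyColoring G (n + 1) fun i => S i ∩ C := by
  refine ⟨fun i => ?_, fun i x hx y hy => h.not_adj i x hx.1 y hy.1, fun i j hij x hx => ?_⟩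
  · rcases (Fin.le_last i).eq_or_lt with rfl | hi
    · exact ⟨v, hv, hvC⟩
    · obtain ⟨w, hw, hvw⟩ := h.exists_adj _ i hi v hv
      exact ⟨w, hw, hC v hvC w hvw⟩
  · obtain ⟨w, hw, hxw⟩ := h.exists_adj i j hij x hx.1
    exact ⟨w, ⟨hw, hC x hx.2 w hxw⟩, hxw⟩

theorem image {f : V → W} {C : Set V} (h : IsPartialGreedyColoring G k S) (hSC : ∀ i, S i ⊆ C)
    (hf : ∀ x ∈ C, ∀ y ∈ C, G'.Adj (f x) (f y) ↔ G.Adj x y) :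
    IsPartialGreedyColoring G' k fun i => f '' S i := by
  refine ⟨fun i => (h.nonempty i).image f, ?_, ?_⟩
  · rintro i _ ⟨x, hx, rfl⟩ _ ⟨y, hy, rfl⟩ hxy
    exact h.not_adj i x hx y hy ((hf x (hSC i hx) y (hSC i hy)).1 hxy)
  · rintro i j hij _ ⟨x, hx, rfl⟩
    obtain ⟨y, hy, hxy⟩ := h.exists_adj i j hij x hx
    exact ⟨f y, ⟨y, hy, rfl⟩, (hf x (hSC i hx) y (hSC j hy)).2 hxy⟩

end IsPartialGreedyColoring

theorem bddAbove_setOf_isGreedyColoring [Fintype V] (G : SimpleGraph V) :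
    BddAbove {k | ∃ S : Fin k → Set V, IsGreedyColoring G k S} :=
  ⟨Fintype.card V, fun _ ⟨_, hS⟩ => hS.isPartialGreedyColoring.card_le⟩

theorem IsPartialGreedyColoring.le_grundy [Fintype V] (h : IsPartialGreedyColoring G k S) :
    k ≤ grundy G :=
  let ⟨_, hk, S', hS'⟩ := h.exists_isGreedyColoring
  hk.trans (le_csSup (bddAbove_setOf_isGreedyColoring G) ⟨S', hS'⟩)

theorem exists_isGreedyColoring_grundy [Fintype V] (G : SimpleGraph V) :
    ∃ S : Fin (grundy G) → Set V, IsGreedyColoring G (grundy G) S := by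
  have hempty : IsPartialGreedyColoring G 0 Fin.elim0 :=
    ⟨fun i => i.elim0, fun i => i.elim0, fun i => i.elim0⟩
  obtain ⟨k, -, S, hS⟩ := hempty.exists_isGreedyColoring
  exact Nat.sSup_mem (s := {k | ∃ S : Fin k → Set V, IsGreedyColoring G k S}) ⟨k, S, hS⟩
    (bddAbove_setOf_isGreedyColoring G)

theorem exists_adj_of_two_le_grundy [Fintype V] (h : 2 ≤ grundy G) : ∃ v w, G.Adj v w := by
  obtain ⟨S, hS⟩ := exists_isGreedyColoring_grundy G
  obtain ⟨v, hv⟩ := hS.2.1 ⟨1, h⟩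
  obtain ⟨w, -, hvw⟩ := hS.2.2.2 ⟨1, h⟩ ⟨0, by omega⟩ (by simp [Fin.lt_def]) v hv
  exact ⟨v, w, hvw⟩

/-- `C` is a union of components of `G`, on which `f` preserves and reflects adjacency. -/
structure IsFaithfulOn (G : SimpleGraph V) (G' : SimpleGraph W) (f : V → W) (C : Set V) :
    Prop where
  adj_mem : ∀ x ∈ C, ∀ y, G.Adj x y → y ∈ C
  adj_iff : ∀ x ∈ C, ∀ y ∈ C, G'.Adj (f x) (f y) ↔ G.Adj x y

theorem grundy_le_of_forall_exists_isFaithfulOn [Fintype V] [Fintype W]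
    (h : ∀ v, ∃ (f : V → W) (C : Set V), v ∈ C ∧ IsFaithfulOn G G' f C) :
    grundy G ≤ grundy G' := by
  obtain ⟨S, hS⟩ := exists_isGreedyColoring_grundy G
  generalize grundy G = k at S hS ⊢
  cases k with
  | zero => exact Nat.zero_le _
  | succ n =>
    obtain ⟨v, hv⟩ := hS.2.1 (Fin.last n)
    obtain ⟨f, C, hvC, hf⟩ := h v
    exact ((hS.isPartialGreedyColoring.inter hf.adj_mem hv hvC).image
      (fun _ => Set.inter_subset_right) hf.adj_iff).le_grundy

theorem IsFaithfulOn.tensorProd {U : Type*} (K : SimpleGraph U) {f : V → W} {C : Set V}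
    (h : IsFaithfulOn G G' f C) :
    IsFaithfulOn (_root_.tensorProd K G) (_root_.tensorProd K G') (Prod.map id f) {p | p.2 ∈ C} :=
  ⟨fun p hp q hpq => h.adj_mem p.2 hp q.2 hpq.2,
    fun p hp q hq => and_congr_right' (h.adj_iff p.2 hp q.2 hq)⟩

theorem neighborSet_subset_of_grundy_le_two [Fintype V] (hG : grundy G ≤ 2) {r b b' : V}
    (hb : G.Adj r b) (hb' : G.Adj r b') : G.neighborSet b ⊆ G.neighborSet b' := by
  intro z (hz : G.Adj b z)
  by_contra hb'z
  rw [mem_neighborSet] at hb'z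
  have hS : IsPartialGreedyColoring G 3 ![{b', z}, {b}, {r}] := by
    refine ⟨fun i => ?_, fun i => ?_, fun i j hij => ?_⟩
    · fin_cases i <;> simp
    · fin_cases i <;> simp [hb'z, mt G.adj_symm hb'z]
    · fin_cases i <;> fin_cases j <;> simp_all
  have := hS.le_grundy
  omega

theorem not_adj_of_grundy_le_two [Fintype V] (hG : grundy G ≤ 2) {r a b : V}
    (ha : G.Adj r a) (hb : G.Adj r b) : ¬ G.Adj a b :=
  fun hab => G.irrefl (neighborSet_subset_of_grundy_le_two hG ha hb hab)

theorem exists_isFaithfulOn_top_of_grundy_le_two [Fintype V] (hG : grundy G ≤ 2) (x : V) :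
    ∃ (f : V → Fin 2) (C : Set V), x ∈ C ∧ IsFaithfulOn G ⊤ f C := by
  classical
  by_cases hx : ∃ y, G.Adj x y
  swap
  · push Not at hx
    refine ⟨fun _ => 0, {x}, rfl, ⟨?_, ?_⟩⟩
    · rintro _ rfl y hxy
      exact (hx y hxy).elim
    · rintro _ rfl _ rfl
      simp
  obtain ⟨y, hxy⟩ := hx
  have hsub {r b b' : V} := @neighborSet_subset_of_grundy_le_two _ _ _ hG r b b'
  have hnot {r a b : V} := @not_adj_of_grundy_le_two _ _ _ hG r a b
  -- `C` is the component of the edge `xy`, with sides `N(y) ∋ x` and `N(x) ∋ y`.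
  refine ⟨fun z => if G.Adj y z then 0 else 1, {z | G.Adj y z ∨ G.Adj x z}, Or.inl hxy.symm,
    ⟨?_, ?_⟩⟩
  · rintro z (hz | hz) w hzw
    · exact Or.inr (hsub hz hxy.symm hzw)
    · exact Or.inl (hsub hz hxy hzw)
  · rintro z (hz | hz) w (hw | hw)
    · simp [hz, hw, hnot hz hw]
    · simpa [hz, hnot hxy hw] using hsub hxy.symm hz hw
    · simpa [hnot hxy hz, hw] using (hsub hxy.symm hw hz).symm
    · simp [hnot hxy hz, hnot hxy hw, hnot hz hw]

theorem isFaithfulOn_top_of_adj {x y : V} (hxy : G.Adj x y) :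
    IsFaithfulOn (⊤ : SimpleGraph (Fin 2)) G ![x, y] Set.univ :=
  ⟨fun _ _ _ _ => trivial, fun s _ t _ => by fin_cases s <;> fin_cases t <;> simp [hxy, hxy.symm]⟩

end Grundy

/-- If `Γ(H) = 2`, then for every finite graph `G`, `Γ(G × H) = Γ(G × K_2)`. -/
theorem grundy_tensorProd_eq_tensorProd_K2 {β : Type*} [Fintype β]
    (H : SimpleGraph β) (hH : grundy H = 2)
    {α : Type*} [Fintype α] (G : SimpleGraph α) :
    grundy (tensorProd G H) =
      grundy (tensorProd G (⊤ : SimpleGraph (Fin 2))) := by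
  obtain ⟨x, y, hxy⟩ := Grundy.exists_adj_of_two_le_grundy hH.ge
  apply le_antisymm <;> refine Grundy.grundy_le_of_forall_exists_isFaithfulOn fun p => ?_
  · obtain ⟨f, C, hpC, hf⟩ := Grundy.exists_isFaithfulOn_top_of_grundy_le_two hH.le p.2
    exact ⟨_, _, hpC, hf.tensorProd G⟩
  · exact ⟨_, _, Set.mem_univ p.2, (Grundy.isFaithfulOn_top_of_adj hxy).tensorProd G⟩
end
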